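/- arXiv:1007.5344 — 4 statements merged into one kernel-verified Lean document; each statement's English description precedes it below -/
import Mathlib

section
/- Let k ≥ 2 and n = 2k. For any three vertices u, v, w of the Cartesian product graph C_n □ C_n, the sum of pairwise distances satisfies d(u,v) + d(v,w) + d(u,w) ≤ 2·diam(C_n □ C_n) = 4k. -/
/-!
Distances in `C_m □ C_n` are sums of distances in the two cycles, and the distance from `u` to `v`
in `C_n` is the cyclic norm `min (v - u) (n - (v - u))` of `v - u`. Three points of `C_n` cut it
into three arcs of total length `n`, each at least the distance between its endpoints, so their
pairwise distances sum to at most `n`; on the torus this gives `m + n`. The diameter of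
`C_m □ C_n` is `m / 2 + n / 2`, attained between `(0, 0)` and `(m / 2, n / 2)`.
-/

open SimpleGraph

/-- `c` is a radio labeling of `G`: labels are positive integers and for every two
distinct vertices `u, v` we have `d(u,v) + |c(u) - c(v)| ≥ 1 + diam(G)`. -/
def IsRadioLabeling {V : Type*} (G : SimpleGraph V) (c : V → ℕ) : Prop :=
  (∀ v, 1 ≤ c v) ∧
    ∀ u v : V, u ≠ v → G.diam + 1 ≤ G.dist u v + Nat.dist (c u) (c v)

/-- The span of a labeling: the maximum label used. -/
def labelSpan {V : Type*} [Fintype V] (c : V → ℕ) : ℕ := Finset.univ.sup c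

/-- The radio number of `G`: the minimum span over all radio labelings. -/
noncomputable def radioNumber {V : Type*} [Fintype V] (G : SimpleGraph V) : ℕ :=
  sInf {s | ∃ c : V → ℕ, IsRadioLabeling G c ∧ labelSpan c = s}

namespace Fin

variable {n : ℕ}

def cycleNorm (x : Fin n) : ℕ := min x.val (n - x.val)

theorem cycleNorm_eq_min_val_neg (x : Fin n) : x.cycleNorm = min x.val (-x).val := by
  rw [cycleNorm, Fin.val_neg']
  rcases Nat.eq_zero_or_pos x.val with h | h
  · simp [h]
  · rw [Nat.mod_eq_of_lt (by omega)]

theorem cycleNorm_le_half (x : Fin n) : x.cycleNorm ≤ n / 2 := by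
  unfold cycleNorm; omega

theorem cycleNorm_add_le (x y : Fin n) : (x + y).cycleNorm ≤ x.cycleNorm + y.cycleNorm := by
  have := x.isLt; have := y.isLt
  unfold cycleNorm; rw [val_add_eq_ite]; split_ifs <;> omega

theorem cycleNorm_add_cycleNorm_add_cycleNorm_add_le (x y : Fin n) :
    x.cycleNorm + y.cycleNorm + (x + y).cycleNorm ≤ n := by
  have := x.isLt; have := y.isLt
  unfold cycleNorm; rw [val_add_eq_ite]; split_ifs <;> omega

end Fin

namespace SimpleGraph

section boxProd

variable {α β : Type*} {G : SimpleGraph α} {H : SimpleGraph β}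

theorem dist_boxProd (hG : G.Connected) (hH : H.Connected) (x y : α × β) :
    (G □ H).dist x y = G.dist x.1 y.1 + H.dist x.2 y.2 := by
  rw [dist, dist, dist, edist_boxProd, ENat.toNat_add (edist_ne_top_iff_reachable.2 (hG _ _))
    (edist_ne_top_iff_reachable.2 (hH _ _))]

end boxProd

theorem diam_eq_of_forall_dist_le_of_dist_eq {α : Type*} [Finite α] {G : SimpleGraph α}
    (hG : G.Connected) {d : ℕ} (hle : ∀ u v, G.dist u v ≤ d) {u v : α} (h : G.dist u v = d) :
    G.diam = d := by
  have : Nonempty α := ⟨u⟩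
  obtain ⟨u', v', huv'⟩ := G.exists_dist_eq_diam
  exact le_antisymm (huv' ▸ hle u' v') (h ▸ dist_le_diam (connected_iff_ediam_ne_top.1 hG))

section cycleGraph

open Fin.CommRing

variable {n : ℕ} [NeZero n]

theorem cycleNorm_sub_le_one_of_adj {a b : Fin n} (h : (cycleGraph n).Adj a b) :
    (b - a).cycleNorm ≤ 1 := by
  rw [Fin.cycleNorm_eq_min_val_neg, neg_sub]
  rcases cycleGraph_adj'.1 h with h | h
  · exact h ▸ min_le_right _ _
  · exact h ▸ min_le_left _ _

theorem cycleNorm_sub_le_length {u v : Fin n} (w : (cycleGraph n).Walk u v) :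
    (v - u).cycleNorm ≤ w.length := by
  induction w with
  | nil => simp [Fin.cycleNorm]
  | @cons a b c h w ih =>
    calc (c - a).cycleNorm = ((c - b) + (b - a)).cycleNorm := by rw [sub_add_sub_cancel]
      _ ≤ (c - b).cycleNorm + (b - a).cycleNorm := Fin.cycleNorm_add_le _ _
      _ ≤ w.length + 1 := add_le_add ih (cycleNorm_sub_le_one_of_adj h)

theorem connected_cycleGraph : (cycleGraph n).Connected := by
  obtain ⟨m, rfl⟩ : ∃ m, n = m + 1 := ⟨n - 1, by have := NeZero.ne n; omega⟩
  exact cycleGraph_connected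

theorem cycleGraph_adj_add_one_or_eq (u : Fin n) : (cycleGraph n).Adj u (u + 1) ∨ u = u + 1 := by
  rcases Nat.lt_or_ge n 2 with hn | hn
  · have : Subsingleton (Fin n) := Fin.subsingleton_iff_le_one.2 (by omega)
    exact Or.inr (Subsingleton.elim _ _)
  · refine Or.inl (cycleGraph_adj'.2 (Or.inr ?_))
    rw [add_sub_cancel_left, Fin.val_one', Nat.mod_eq_of_lt hn]

theorem cycleGraph_dist_add_natCast_le (u : Fin n) (m : ℕ) :
    (cycleGraph n).dist u (u + (m : Fin n)) ≤ m := by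
  induction m with
  | zero => simp
  | succ m ih =>
    set x : Fin n := u + (m : Fin n)
    have hstep : (cycleGraph n).dist x (x + 1) ≤ 1 := by
      rcases cycleGraph_adj_add_one_or_eq x with h | h
      · exact (dist_eq_one_iff_adj.2 h).le
      · simp [← h]
    calc (cycleGraph n).dist u (u + ((m + 1 : ℕ) : Fin n))
        ≤ (cycleGraph n).dist u x + (cycleGraph n).dist x (x + 1) := by
          rw [Nat.cast_succ, ← add_assoc]; exact connected_cycleGraph.dist_triangle
      _ ≤ m + 1 := add_le_add ih hstep

theorem cycleGraph_dist_le_val_sub (u v : Fin n) : (cycleGraph n).dist u v ≤ (v - u).val := by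
  simpa using cycleGraph_dist_add_natCast_le u (v - u).val

theorem cycleGraph_dist (u v : Fin n) : (cycleGraph n).dist u v = (v - u).cycleNorm := by
  refine le_antisymm ?_ ?_
  · rw [Fin.cycleNorm_eq_min_val_neg, neg_sub]
    exact le_min (cycleGraph_dist_le_val_sub u v) (dist_comm ▸ cycleGraph_dist_le_val_sub v u)
  · obtain ⟨w, hw⟩ := connected_cycleGraph.exists_walk_length_eq_dist u v
    exact hw ▸ cycleNorm_sub_le_length w

theorem cycleGraph_dist_add_dist_add_dist_le (u v w : Fin n) :
    (cycleGraph n).dist u v + (cycleGraph n).dist v w + (cycleGraph n).dist u w ≤ n := by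
  have := Fin.cycleNorm_add_cycleNorm_add_cycleNorm_add_le (w - v) (v - u)
  rw [sub_add_sub_cancel] at this
  rw [cycleGraph_dist, cycleGraph_dist, cycleGraph_dist]
  omega

end cycleGraph

section torus

variable {m n : ℕ} [NeZero m] [NeZero n]

theorem dist_boxProd_cycleGraph (u v : Fin m × Fin n) :
    (cycleGraph m □ cycleGraph n).dist u v = (v.1 - u.1).cycleNorm + (v.2 - u.2).cycleNorm := by
  rw [dist_boxProd connected_cycleGraph connected_cycleGraph, cycleGraph_dist, cycleGraph_dist]

theorem boxProd_cycleGraph_dist_add_dist_add_dist_le (u v w : Fin m × Fin n) :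
    (cycleGraph m □ cycleGraph n).dist u v + (cycleGraph m □ cycleGraph n).dist v w +
      (cycleGraph m □ cycleGraph n).dist u w ≤ m + n := by
  simp only [dist_boxProd connected_cycleGraph connected_cycleGraph]
  have := cycleGraph_dist_add_dist_add_dist_le u.1 v.1 w.1
  have := cycleGraph_dist_add_dist_add_dist_le u.2 v.2 w.2
  omega

theorem diam_boxProd_cycleGraph : (cycleGraph m □ cycleGraph n).diam = m / 2 + n / 2 := by
  have hm := Nat.pos_of_neZero m
  have hn := Nat.pos_of_neZero n
  refine diam_eq_of_forall_dist_le_of_dist_eq (connected_cycleGraph.boxProd connected_cycleGraph)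
    (fun u v ↦ ?_) (u := 0) (v := (⟨m / 2, by omega⟩, ⟨n / 2, by omega⟩)) ?_
  · rw [dist_boxProd_cycleGraph]
    exact add_le_add (Fin.cycleNorm_le_half _) (Fin.cycleNorm_le_half _)
  · rw [dist_boxProd_cycleGraph]
    simp only [Prod.fst_zero, Prod.snd_zero, sub_zero, Fin.cycleNorm]
    omega

end torus

end SimpleGraph

/-- for `n = 2k`, `k ≥ 2`, any three vertices of `C_n □ C_n` have pairwise
distance sum at most `2 · diam(C_n □ C_n) = 4k`. -/
theorem sum_dist_le_two_diam_even (n k : ℕ) (hk : 2 ≤ k) (hn : n = 2 * k)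
    (u v w : Fin n × Fin n) :
    (cycleGraph n □ cycleGraph n).dist u v + (cycleGraph n □ cycleGraph n).dist v w +
        (cycleGraph n □ cycleGraph n).dist u w ≤ 2 * (cycleGraph n □ cycleGraph n).diam ∧
      2 * (cycleGraph n □ cycleGraph n).diam = 4 * k := by
  subst hn
  have : NeZero (2 * k) := ⟨by omega⟩
  have := boxProd_cycleGraph_dist_add_dist_add_dist_le u v w
  rw [diam_boxProd_cycleGraph]
  omega
end

section
/- Let k ≥ 2 and n = 2k. Define p : {0,1,...,n²−1} → {0,...,n−1} × {0,...,n−1} (components taken mod n) by p(i) = (r, kr+s) if i ≡ 0 (mod 4), p(i) = (r+k, kr+s+k) if i ≡ 1 (mod 4), p(i) = (r, kr+s+k) if i ≡ 2 (mod 4), and p(i) = (r+k, kr+s) if i ≡ 3 (mod 4), where r = ⌊i/(2n)⌋ and s = ⌊i/4⌋ mod k. Then p is a bijection. -/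
open SimpleGraph

/-- The position function for even `n = 2k` (Theorem 3.3): with `r = ⌊i/(2n)⌋`,
`s = ⌊i/4⌋ mod k`, and components taken mod `n`,
`p(i) = (r, kr+s), (r+k, kr+s+k), (r, kr+s+k), (r+k, kr+s)` according as
`i ≡ 0, 1, 2, 3 (mod 4)`. -/
def posEven (n k : ℕ) (i : ℕ) : ZMod n × ZMod n :=
  if i % 4 = 0 then ((i / (2 * n) : ℕ), (k * (i / (2 * n)) + i / 4 % k : ℕ))
  else if i % 4 = 1 then
    ((i / (2 * n) + k : ℕ), (k * (i / (2 * n)) + i / 4 % k + k : ℕ))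
  else if i % 4 = 2 then
    ((i / (2 * n) : ℕ), (k * (i / (2 * n)) + i / 4 % k + k : ℕ))
  else ((i / (2 * n) + k : ℕ), (k * (i / (2 * n)) + i / 4 % k : ℕ))

/-!
Write `i = 4kr + 4s + q` with `r, s < k` and `q < 4`. Then `p(i) = (r + k·[q odd], s + k·(r + [q ∈ {1,2}]))`
modulo `2k`, and since `r, s < k` a residue `r + k·t` mod `2k` determines `r` and the parity of `t`.
So `p(i)` recovers `r`, `s`, the parity of `q` and whether `q ∈ {1,2}`, hence `q` and `i`: `p` is injective,
and both sides have `n²` elements.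
-/

theorem Nat.add_mul_eq_add_mul_iff {k r r' a a' : ℕ} (hr : r < k) (hr' : r' < k) :
    r + k * a = r' + k * a' ↔ r = r' ∧ a = a' := by
  refine ⟨fun h => ?_, by rintro ⟨rfl, rfl⟩; rfl⟩
  have hk : 0 < k := by omega
  obtain ⟨ha, hr⟩ := (Nat.div_mod_unique hk).2 ⟨h, hr⟩
  obtain ⟨ha', hr'⟩ := (Nat.div_mod_unique hk).2 ⟨rfl, hr'⟩
  exact ⟨hr.symm.trans hr', ha.symm.trans ha'⟩

theorem exists_eq_four_mul_add_of_lt_sq {k i : ℕ} (hi : i < (2 * k) ^ 2) :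
    ∃ r < k, ∃ s < k, ∃ q < 4, i = 4 * k * r + 4 * s + q := by
  have hk : 0 < 4 * k := by rcases k with _ | k <;> simp_all
  have hr : i / (4 * k) < k := Nat.div_lt_of_lt_mul (by linarith)
  have hm := Nat.mod_lt i hk
  refine ⟨i / (4 * k), hr, i % (4 * k) / 4, by omega, i % (4 * k) % 4, by omega, ?_⟩
  have := Nat.div_add_mod i (4 * k)
  omega

theorem ZMod.val_natCast_add_mul {k r : ℕ} (t : ℕ) (hr : r < k) :
    ((r + k * t : ℕ) : ZMod (2 * k)).val = r + k * (t % 2) := by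
  have hlt : r + k * (t % 2) < 2 * k := by
    have : t % 2 ≤ 1 := by omega
    nlinarith
  have hdecomp : r + k * t = r + k * (t % 2) + 2 * k * (t / 2) := by
    nth_rw 1 [← Nat.mod_add_div t 2]
    ring
  rw [ZMod.val_natCast, hdecomp, Nat.add_mul_mod_self_left, Nat.mod_eq_of_lt hlt]

theorem ZMod.natCast_add_mul_eq_iff {k r r' : ℕ} (t t' : ℕ) (hr : r < k) (hr' : r' < k) :
    ((r + k * t : ℕ) : ZMod (2 * k)) = ((r' + k * t' : ℕ) : ZMod (2 * k)) ↔
      r = r' ∧ t % 2 = t' % 2 := by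
  have : NeZero (2 * k) := ⟨by omega⟩
  rw [← ZMod.val_injective _ |>.eq_iff, ZMod.val_natCast_add_mul t hr,
    ZMod.val_natCast_add_mul t' hr', Nat.add_mul_eq_add_mul_iff hr hr']

theorem posEven_four_mul_add {k r s q : ℕ} (hs : s < k) (hq : q < 4) :
    posEven (2 * k) k (4 * k * r + 4 * s + q) =
      (((r + k * (q % 2) : ℕ) : ZMod (2 * k)),
        ((s + k * (r + (q + q / 2) % 2) : ℕ) : ZMod (2 * k))) := by
  have hi : 4 * k * r + 4 * s + q = 4 * (s + k * r) + q := by ring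
  have hr : (4 * k * r + 4 * s + q) / (2 * (2 * k)) = r :=
    ((Nat.div_mod_unique (c := 4 * s + q) (by omega)).2 ⟨by ring, by omega⟩).1
  have hs' : (4 * (s + k * r) + q) / 4 % k = s := by
    rw [show (4 * (s + k * r) + q) / 4 = s + k * r by omega, Nat.add_mul_mod_self_left,
      Nat.mod_eq_of_lt hs]
  rw [posEven, hr, hi, hs', show (4 * (s + k * r) + q) % 4 = q by omega]
  interval_cases q <;> simp only [Prod.ext_iff] <;> norm_num <;> ring

/-- for `n = 2k`, `k ≥ 2`, the position function `p` is a bijection from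
`{0, 1, …, n² - 1}` onto the `n²` pairs `(v, w)` with components mod `n`. -/
theorem posEven_bijective (n k : ℕ) (hk : 2 ≤ k) (hn : n = 2 * k) :
    Function.Bijective (fun i : Fin (n ^ 2) => posEven n k i) := by
  subst hn
  have : NeZero (2 * k) := ⟨by omega⟩
  refine (Fintype.bijective_iff_injective_and_card _).2 ⟨?_, by simp [ZMod.card, sq]⟩
  rintro ⟨i, hi⟩ ⟨j, hj⟩ h
  obtain ⟨r, hr, s, hs, q, hq, rfl⟩ := exists_eq_four_mul_add_of_lt_sq hi
  obtain ⟨r', hr', s', hs', q', hq', rfl⟩ := exists_eq_four_mul_add_of_lt_sq hj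
  simp only [posEven_four_mul_add hs hq, posEven_four_mul_add hs' hq', Prod.ext_iff] at h
  obtain ⟨rfl, hq2⟩ := (ZMod.natCast_add_mul_eq_iff _ _ hr hr').1 h.1
  obtain ⟨rfl, hqr⟩ := (ZMod.natCast_add_mul_eq_iff _ _ hs hs').1 h.2
  rw [Fin.mk.injEq]
  omega
end

section
/- Let k ≥ 1 be odd and n = 2k+1. Define p : {0,1,...,n²−1} → {0,...,n−1} × {0,...,n−1} (components taken mod n) by p(i) = (ik mod n, (⌊i/n⌋ + i·(k+1)/2) mod n). Then p is a bijection. -/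
open SimpleGraph

/-- The position function for odd `n = 2k + 1` with `k` odd (Theorem 3.4, Case 1):
`p(i) = (ik, ⌊i/n⌋ + i·(k+1)/2)`, components taken mod `n`. -/
def posOdd (n k : ℕ) (i : ℕ) : ZMod n × ZMod n :=
  ((i * k : ℕ), (i / n + i * ((k + 1) / 2) : ℕ))

/-!
Write `i = q n + r` with `0 ≤ q, r < n`; then `p(i) = (r k, q + r c)` in `ZMod n` with
`c = (k + 1) / 2`. The base-`n` digits `(r, q)` run bijectively over `ZMod n × ZMod n`, and
the shear `(r, q) ↦ (r k, q + r c)` is invertible because `k` is a unit modulo `2k + 1`.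
-/

theorem ZMod.bijective_natCast_mod_div (n : ℕ) [NeZero n] :
    Function.Bijective fun i : Fin (n ^ 2) => (((i : ℕ) : ZMod n), (((i : ℕ) / n : ℕ) : ZMod n)) := by
  rw [Fintype.bijective_iff_injective_and_card]
  refine ⟨fun i j hij => ?_, by simp [ZMod.card, sq]⟩
  obtain ⟨hmod, hdiv⟩ := Prod.mk.inj hij
  have hsq (i : Fin (n ^ 2)) : (i : ℕ) / n < n := Nat.div_lt_of_lt_mul (sq n ▸ i.isLt)
  rw [ZMod.natCast_eq_natCast_iff'] at hmod hdiv
  rw [Nat.mod_eq_of_lt (hsq i), Nat.mod_eq_of_lt (hsq j)] at hdiv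
  exact Fin.ext (by rw [← Nat.div_add_mod (i : ℕ) n, ← Nat.div_add_mod (j : ℕ) n, hdiv, hmod])

theorem bijective_shear {R : Type*} [Ring R] {a : R} (ha : IsUnit a) (c : R) :
    Function.Bijective fun x : R × R => (x.1 * a, x.2 + x.1 * c) := by
  obtain ⟨u, rfl⟩ := ha
  refine Function.bijective_iff_has_inverse.2
    ⟨fun y => (y.1 * ↑u⁻¹, y.2 - y.1 * ↑u⁻¹ * c), fun x => ?_, fun y => ?_⟩ <;> simp

theorem posOdd_eq (n k i : ℕ) :
    posOdd n k i = ((i : ZMod n) * k, ((i / n : ℕ) : ZMod n) + (i : ZMod n) * ((k + 1) / 2 : ℕ)) := by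
  simp [posOdd]

theorem isUnit_natCast_zmod_two_mul_add_one (k : ℕ) : IsUnit (k : ZMod (2 * k + 1)) :=
  (ZMod.isUnit_iff_coprime k _).2 ((Nat.coprime_mul_right_add_right k 1 2).2 (Nat.coprime_one_right k))

theorem posOdd_bijective_general (n k : ℕ) (hn : n = 2 * k + 1) :
    Function.Bijective (fun i : Fin (n ^ 2) => posOdd n k i) := by
  subst hn
  have hshear := bijective_shear (isUnit_natCast_zmod_two_mul_add_one k)
    (((k + 1) / 2 : ℕ) : ZMod (2 * k + 1))
  simpa only [posOdd_eq, Function.comp_def] using hshear.comp (ZMod.bijective_natCast_mod_div (2 * k + 1))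

/-- for `n = 2k + 1` with `k ≥ 1` odd, the position function `p` is a bijection
from `{0, 1, …, n² - 1}` onto the `n²` pairs `(v, w)` with components mod `n`. -/
theorem posOdd_bijective (n k : ℕ) (hk : 1 ≤ k) (hkodd : Odd k) (hn : n = 2 * k + 1) :
    Function.Bijective (fun i : Fin (n ^ 2) => posOdd n k i) :=
  posOdd_bijective_general n k hn
end

section
/- Let k ≥ 2 and n = 2k. Define p : {0,1,...,n²−1} → V(C_n □ C_n) (components mod n) by p(i) = (r, kr+s), (r+k, kr+s+k), (r, kr+s+k), (r+k, kr+s) according as i ≡ 0, 1, 2, 3 (mod 4), where r = ⌊i/(2n)⌋ and s = ⌊i/4⌋ mod k; and define c(i) = 1 + (i/2)(k+2) for i even and c(i) = 2 + ((i−1)/2)(k+2) for i odd. Then for all 0 ≤ i < j ≤ n²−1, d(p(i), p(j)) + (c(j) − c(i)) ≥ 2k + 1; that is, the vertex labeling assigning label c(i) to vertex p(i) is a radio labeling of C_n □ C_n. -/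
/-!
The graph distance on `C_n □ C_n` dominates the torus norm `|x₁| + |x₂|` of the displacement,
each coordinate represented in `(-n/2, n/2]`. Group the indices into pairs `{2m, 2m+1}`: the
second vertex of a pair is the first one shifted by the antipode `(k, k)`, of norm `2k`, and the
first vertices of consecutive pairs differ by a vector `Δ` of norm `k - 1` or `k` (namely `(0, k)`,
or `(c, 1 - k)` with a carry `c ≤ 1`). Adding the antipode turns a norm `t` into at least
`2k - t`. Hence from `2m + b` to `2m + 2 + b'` the distance is at least `k - 1`, and at least `k`
when `b ≠ b'`, against a label gap of `k + 2 + b' - b`; inside a pair the distance is at least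
`2k` against a label gap of `1`; and indices in pairs further apart have labels at least
`2k + 3` apart.
-/

open SimpleGraph

/-- The cycle graph on `ZMod n`: `u` and `v` are adjacent iff they differ by `1 (mod n)`. -/
def zmodCycle (n : ℕ) : SimpleGraph (ZMod n) := circulantGraph {1}

/-- The labeling for even `n = 2k`: `c(i) = 1 + (i/2)(k+2)` for `i` even and
`c(i) = 2 + ((i-1)/2)(k+2)` for `i` odd. -/
def labelEven (k : ℕ) (i : ℕ) : ℕ :=
  if i % 2 = 0 then 1 + i / 2 * (k + 2) else 2 + (i - 1) / 2 * (k + 2)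

namespace ZMod

lemma natAbs_valMinAbs_natCast_le (n a : ℕ) : (a : ZMod n).valMinAbs.natAbs ≤ a := by
  rcases n.eq_zero_or_pos with rfl | hn
  · exact (Int.natAbs_natCast a).le
  · have : NeZero n := ⟨hn.ne'⟩
    rw [valMinAbs_natAbs_eq_min, val_natCast]
    exact (min_le_left _ _).trans (Nat.mod_le _ _)

lemma natCast_add_self_eq_zero (k : ℕ) : (k : ZMod (2 * k)) + k = 0 := by
  rw [← Nat.cast_add, ← two_mul, natCast_self]

end ZMod

lemma SimpleGraph.dist_boxProd_s16 {α β : Type*} {G : SimpleGraph α} {H : SimpleGraph β}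
    {x y : α × β} (hG : G.Reachable x.1 y.1) (hH : H.Reachable x.2 y.2) :
    (G □ H).dist x y = G.dist x.1 y.1 + H.dist x.2 y.2 := by
  have h := (reachable_boxProd.2 ⟨hG, hH⟩ : (G □ H).Reachable x y).coe_dist_eq_edist
  rw [edist_boxProd, ← hG.coe_dist_eq_edist, ← hH.coe_dist_eq_edist] at h
  exact_mod_cast h

lemma zmodCycle_reachable_add_one (n : ℕ) (x : ZMod n) : (zmodCycle n).Reachable x (x + 1) := by
  by_cases h : x = x + 1
  · rw [← h]
  · exact Adj.reachable ⟨h, Or.inr (by simp)⟩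

lemma zmodCycle_connected (n : ℕ) : (zmodCycle n).Connected := by
  have h : ∀ z : ℤ, (zmodCycle n).Reachable 0 z := by
    intro z
    induction z using Int.induction_on with
    | zero => simp
    | succ m ih => exact_mod_cast ih.trans (zmodCycle_reachable_add_one n _)
    | pred m ih =>
      refine ih.trans (Reachable.symm ?_)
      simpa using zmodCycle_reachable_add_one n ((-m - 1 : ℤ) : ZMod n)
  refine ⟨fun u v => ?_⟩
  obtain ⟨a, rfl⟩ := ZMod.intCast_surjective u
  obtain ⟨b, rfl⟩ := ZMod.intCast_surjective v
  exact (h a).symm.trans (h b)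

lemma natAbs_valMinAbs_sub_le_length {n : ℕ} {u v : ZMod n} (w : (zmodCycle n).Walk u v) :
    (v - u).valMinAbs.natAbs ≤ w.length := by
  induction w with
  | nil => simp
  | @cons u u' v h p ih =>
    have hstep : (u' - u).valMinAbs.natAbs ≤ 1 := by
      obtain ⟨-, h | h⟩ := h <;> rw [Set.mem_singleton_iff] at h
      · rw [← neg_sub, ZMod.natAbs_valMinAbs_neg, h]
        exact_mod_cast ZMod.natAbs_valMinAbs_natCast_le n 1
      · rw [h]
        exact_mod_cast ZMod.natAbs_valMinAbs_natCast_le n 1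
    calc (v - u).valMinAbs.natAbs ≤ ((v - u').valMinAbs + (u' - u).valMinAbs).natAbs := by
          simpa using ZMod.natAbs_valMinAbs_add_le (v - u') (u' - u)
      _ ≤ p.length + 1 := (Int.natAbs_add_le _ _).trans (add_le_add ih hstep)
      _ = (Walk.cons h p).length := rfl

lemma natAbs_valMinAbs_sub_le_dist {n : ℕ} (u v : ZMod n) :
    (v - u).valMinAbs.natAbs ≤ (zmodCycle n).dist u v := by
  obtain ⟨w, hw⟩ := (zmodCycle_connected n).exists_walk_length_eq_dist u v
  exact hw ▸ natAbs_valMinAbs_sub_le_length w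

def torusNorm {n : ℕ} (z : ZMod n × ZMod n) : ℕ :=
  z.1.valMinAbs.natAbs + z.2.valMinAbs.natAbs

lemma torusNorm_add_le {n : ℕ} (z w : ZMod n × ZMod n) :
    torusNorm (z + w) ≤ torusNorm z + torusNorm w := by
  have h1 := (ZMod.natAbs_valMinAbs_add_le z.1 w.1).trans (Int.natAbs_add_le _ _)
  have h2 := (ZMod.natAbs_valMinAbs_add_le z.2 w.2).trans (Int.natAbs_add_le _ _)
  simp only [torusNorm, Prod.fst_add, Prod.snd_add]
  omega

lemma torusNorm_neg {n : ℕ} (z : ZMod n × ZMod n) : torusNorm (-z) = torusNorm z := by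
  simp only [torusNorm, Prod.fst_neg, Prod.snd_neg, ZMod.natAbs_valMinAbs_neg]

lemma torusNorm_sub_le_dist {n : ℕ} (x y : ZMod n × ZMod n) :
    torusNorm (y - x) ≤ (zmodCycle n □ zmodCycle n).dist x y := by
  rw [dist_boxProd_s16 (zmodCycle_connected n _ _) (zmodCycle_connected n _ _)]
  exact add_le_add (natAbs_valMinAbs_sub_le_dist _ _) (natAbs_valMinAbs_sub_le_dist _ _)

def torusAntipode (k : ℕ) : ZMod (2 * k) × ZMod (2 * k) := (k, k)

lemma torusNorm_torusAntipode (k : ℕ) : torusNorm (torusAntipode k) = 2 * k := by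
  have h : (k : ZMod (2 * k)).valMinAbs = k := ZMod.valMinAbs_natCast_of_le_half (by omega)
  simp only [torusNorm, torusAntipode, h, Int.natAbs_natCast]
  omega

lemma neg_torusAntipode (k : ℕ) : -torusAntipode k = torusAntipode k := by
  ext <;> exact neg_eq_of_add_eq_zero_left (ZMod.natCast_add_self_eq_zero k)

lemma two_mul_sub_torusNorm_le (k : ℕ) (z : ZMod (2 * k) × ZMod (2 * k)) :
    2 * k - torusNorm z ≤ torusNorm (z + torusAntipode k) := by
  have h := torusNorm_add_le (z + torusAntipode k) (-z)
  rw [add_neg_cancel_comm, torusNorm_torusAntipode, torusNorm_neg] at h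
  omega

lemma div_two_mul_two_mul (i k : ℕ) : i / (2 * (2 * k)) = i / 4 / k := by
  rw [← mul_assoc, ← Nat.div_div_eq_div_mul]; rfl

lemma posEven_four_mul (k q : ℕ) :
    posEven (2 * k) k (4 * q) = (((q / k : ℕ) : ZMod (2 * k)), ((q : ℕ) : ZMod (2 * k))) := by
  simp [posEven, div_two_mul_two_mul, Nat.div_add_mod]

lemma posEven_four_mul_add_two (k q : ℕ) :
    posEven (2 * k) k (4 * q + 2) =
      (((q / k : ℕ) : ZMod (2 * k)), ((q + k : ℕ) : ZMod (2 * k))) := by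
  have hq : (4 * q + 2) / 4 = q := by omega
  simp [posEven, div_two_mul_two_mul, hq, Nat.div_add_mod]

lemma posEven_two_mul_add_one (k m : ℕ) :
    posEven (2 * k) k (2 * m + 1) = posEven (2 * k) k (2 * m) + torusAntipode k := by
  obtain ⟨q, rfl | rfl⟩ := Nat.even_or_odd' m
  · have hq : (4 * q + 1) / 4 = q := by omega
    rw [show 2 * (2 * q) = 4 * q by ring, posEven_four_mul]
    simp [posEven, torusAntipode, div_two_mul_two_mul, hq, Nat.div_add_mod]
  · have hq : (4 * q + 3) / 4 = q := by omega
    rw [show 2 * (2 * q + 1) + 1 = 4 * q + 3 by ring, show 2 * (2 * q + 1) = 4 * q + 2 by ring,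
      posEven_four_mul_add_two]
    simp [posEven, torusAntipode, div_two_mul_two_mul, hq, Nat.div_add_mod, add_assoc,
      ZMod.natCast_add_self_eq_zero]

lemma torusNorm_posEven_succ_sub {k : ℕ} (hk : 1 ≤ k) (m : ℕ) :
    k - 1 ≤ torusNorm (posEven (2 * k) k (2 * (m + 1)) - posEven (2 * k) k (2 * m)) ∧
      torusNorm (posEven (2 * k) k (2 * (m + 1)) - posEven (2 * k) k (2 * m)) ≤ k := by
  have hcast : ∀ a : ℕ, a ≤ k → (a : ZMod (2 * k)).valMinAbs.natAbs = a := fun a ha => by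
    rw [ZMod.valMinAbs_natCast_of_le_half (by omega), Int.natAbs_natCast]
  obtain ⟨q, rfl | rfl⟩ := Nat.even_or_odd' m
  · rw [show 2 * (2 * q + 1) = 4 * q + 2 by ring, show 2 * (2 * q) = 4 * q by ring,
      posEven_four_mul, posEven_four_mul_add_two]
    simp only [torusNorm, Prod.mk_sub_mk, sub_self, Nat.cast_add, add_sub_cancel_left,
      ZMod.valMinAbs_zero, Int.natAbs_zero, hcast k le_rfl]
    omega
  · obtain ⟨carry, hcarry, hdiv⟩ : ∃ c ≤ 1, (q + 1) / k = q / k + c :=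
      ⟨_, by split_ifs <;> simp, Nat.succ_div⟩
    have hsnd : ((q + 1 : ℕ) : ZMod (2 * k)) - ((q + k : ℕ) : ZMod (2 * k)) =
        -((k - 1 : ℕ) : ZMod (2 * k)) := by
      rw [Nat.cast_sub hk]; push_cast; ring
    rw [show 2 * (2 * q + 1 + 1) = 4 * (q + 1) by ring, show 2 * (2 * q + 1) = 4 * q + 2 by ring,
      posEven_four_mul, posEven_four_mul_add_two, Prod.mk_sub_mk, hdiv, hsnd]
    simp only [torusNorm, Nat.cast_add, add_sub_cancel_left, ZMod.natAbs_valMinAbs_neg,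
      hcast carry (by omega), hcast (k - 1) (by omega)]
    omega

lemma two_mul_le_dist_posEven_pair (k m : ℕ) :
    2 * k ≤ (zmodCycle (2 * k) □ zmodCycle (2 * k)).dist
      (posEven (2 * k) k (2 * m)) (posEven (2 * k) k (2 * m + 1)) := by
  have h := torusNorm_sub_le_dist (posEven (2 * k) k (2 * m))
    (posEven (2 * k) k (2 * m) + torusAntipode k)
  rwa [add_sub_cancel_left, torusNorm_torusAntipode, ← posEven_two_mul_add_one] at h

lemma dist_posEven_consecutive_pairs {k : ℕ} (hk : 1 ≤ k) (m : ℕ) {b b' : ℕ} (hb : b < 2)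
    (hb' : b' < 2) :
    k - 1 + b ≤ (zmodCycle (2 * k) □ zmodCycle (2 * k)).dist
      (posEven (2 * k) k (2 * m + b)) (posEven (2 * k) k (2 * (m + 1) + b')) + b' := by
  obtain ⟨hlo, hhi⟩ := torusNorm_posEven_succ_sub hk m
  have hflip := two_mul_sub_torusNorm_le k
    (posEven (2 * k) k (2 * (m + 1)) - posEven (2 * k) k (2 * m))
  refine le_trans ?_ (Nat.add_le_add_right (torusNorm_sub_le_dist _ _) _)
  interval_cases b <;> interval_cases b' <;>
    simp only [add_zero, posEven_two_mul_add_one, add_sub_add_right_eq_sub]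
  · omega
  · rw [add_sub_right_comm]; omega
  · rw [sub_add_eq_sub_sub, ← neg_torusAntipode, sub_neg_eq_add]; omega
  · omega

lemma labelEven_two_mul_add (k m : ℕ) {b : ℕ} (hb : b < 2) :
    labelEven k (2 * m + b) = 1 + m * (k + 2) + b := by
  interval_cases b
  · rw [labelEven, if_pos (by omega), show (2 * m + 0) / 2 = m by omega]
    ring
  · rw [labelEven, if_neg (by omega), show (2 * m + 1 - 1) / 2 = m by omega]
    ring

/-- for `n = 2k` with `k ≥ 2`, assigning label `c(i)` to vertex `p(i)` gives a
radio labeling of `C_n □ C_n`: for all `0 ≤ i < j ≤ n² - 1`,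
`d(p(i), p(j)) + (c(j) - c(i)) ≥ 2k + 1`. -/
theorem labelEven_posEven_radio (n k : ℕ) (hk : 2 ≤ k) (hn : n = 2 * k)
    (i j : Fin (n ^ 2)) (hij : (i : ℕ) < (j : ℕ)) :
    2 * k + 1 ≤
      (zmodCycle n □ zmodCycle n).dist (posEven n k i) (posEven n k j) +
        (labelEven k j - labelEven k i) := by
  subst hn
  obtain ⟨m, b, hb, hi⟩ : ∃ m b, b < 2 ∧ (i : ℕ) = 2 * m + b :=
    ⟨i / 2, i % 2, Nat.mod_lt _ two_pos, (Nat.div_add_mod _ _).symm⟩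
  obtain ⟨m', b', hb', hj⟩ : ∃ m b, b < 2 ∧ (j : ℕ) = 2 * m + b :=
    ⟨j / 2, j % 2, Nat.mod_lt _ two_pos, (Nat.div_add_mod _ _).symm⟩
  rw [hi, hj] at hij ⊢
  rw [labelEven_two_mul_add k m hb, labelEven_two_mul_add k m' hb']
  rcases (by omega : m = m' ∨ m' = m + 1 ∨ m + 2 ≤ m') with rfl | rfl | hfar
  · obtain ⟨rfl, rfl⟩ : b = 0 ∧ b' = 1 := by omega
    have := two_mul_le_dist_posEven_pair k m
    rw [add_zero]
    omega
  · have := dist_posEven_consecutive_pairs (by omega : 1 ≤ k) m hb hb'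
    rw [add_one_mul]
    omega
  · have := Nat.mul_le_mul_right (k + 2) hfar
    rw [add_mul] at this
    omega
end
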